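/- arXiv:1703.00945 — 3 statements merged into one kernel-verified Lean document; each statement's English description precedes it below -/
import Mathlib

section
/- (Edmonds–Fulkerson) For every clutter M, b(b(M)) = M, i.e., the blocker operation is an involution on clutters. -/
open Set

/-- A clutter: a finite ground set together with an antichain of subsets (rows). -/
structure Clutter (α : Type*) where
  E : Set α
  E_finite : E.Finite
  rows : Set (Set α)
  rows_subset : ∀ A ∈ rows, A ⊆ E
  antichain : ∀ A ∈ rows, ∀ B ∈ rows, A ⊆ B → A = B

variable {α : Type*}

/-- Deletion of an element of a clutter. -/
def Clutter.delete (M : Clutter α) (v : α) : Clutter α where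
  E := M.E \ {v}
  E_finite := M.E_finite.diff
  rows := {A | A ∈ M.rows ∧ v ∉ A}
  rows_subset := fun A hA => subset_diff_singleton (M.rows_subset A hA.1) hA.2
  antichain := fun A hA B hB h => M.antichain A hA.1 B hB.1 h

/-- Contraction of an element of a clutter. -/
def Clutter.contract (M : Clutter α) (v : α) : Clutter α where
  E := M.E \ {v}
  E_finite := M.E_finite.diff
  rows := {A | A ∈ (fun B => B \ {v}) '' M.rows ∧
    ∀ B ∈ (fun B => B \ {v}) '' M.rows, B ⊆ A → B = A}
  rows_subset := by
    rintro A ⟨⟨B, hB, rfl⟩, -⟩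
    exact diff_subset_diff_left (M.rows_subset B hB)
  antichain := fun A hA B hB hAB => hB.2 A hA.1 hAB

/-- A separation of a clutter: a partition of the ground set into two non-empty
parts such that every row lies in one of the parts. -/
def Clutter.IsSeparation (M : Clutter α) (X Y : Set α) : Prop :=
  X.Nonempty ∧ Y.Nonempty ∧ Disjoint X Y ∧ X ∪ Y = M.E ∧
    ∀ A ∈ M.rows, A ⊆ X ∨ A ⊆ Y

/-- A clutter is connected if it admits no separation. -/
def Clutter.Connected (M : Clutter α) : Prop := ¬ ∃ X Y, M.IsSeparation X Y
/-- A transversal (blocking set): a subset of the ground set meeting every row. -/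
def Clutter.IsTransversal (M : Clutter α) (B : Set α) : Prop :=
  B ⊆ M.E ∧ ∀ A ∈ M.rows, (B ∩ A).Nonempty

/-- The blocker of a clutter: rows are the inclusion-minimal transversals. -/
def Clutter.blocker (M : Clutter α) : Clutter α where
  E := M.E
  E_finite := M.E_finite
  rows := {B | M.IsTransversal B ∧ ∀ C, M.IsTransversal C → C ⊆ B → C = B}
  rows_subset := fun B hB => hB.1.1
  antichain := fun A hA B hB h => hB.2 A hA.1 h

/-!
A transversal of `b(M)` is exactly a subset of `E` containing a row of `M`: if `B` contains
no row, then `E \ B` meets every row, hence contains a minimal transversal that misses `B`.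
The minimal such sets are the rows of `M`, because the rows form an antichain.
-/

namespace Clutter

theorem ext {M N : Clutter α} (hE : M.E = N.E) (hrows : M.rows = N.rows) : M = N := by
  cases M; cases N; simp_all

theorem mem_blocker_rows_iff (M : Clutter α) {B : Set α} :
    B ∈ M.blocker.rows ↔ Minimal M.IsTransversal B := by
  simp only [minimal_subset_iff, blocker, Set.mem_ofPred_eq, eq_comm]

theorem exists_blocker_row_subset (M : Clutter α) {B : Set α} (hB : M.IsTransversal B) :
    ∃ C ∈ M.blocker.rows, C ⊆ B := by
  have hfin : {C | M.IsTransversal C}.Finite :=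
    M.E_finite.finite_subsets.subset fun C hC => hC.1
  obtain ⟨C, hCB, hC⟩ := hfin.isPWO.exists_le_minimal hB
  exact ⟨C, M.mem_blocker_rows_iff.2 hC, hCB⟩

theorem isTransversal_blocker_iff (M : Clutter α) {B : Set α} :
    M.blocker.IsTransversal B ↔ B ⊆ M.E ∧ ∃ A ∈ M.rows, A ⊆ B := by
  refine ⟨fun ⟨hBE, hmeets⟩ => ⟨hBE, ?_⟩, fun ⟨hBE, A, hA, hAB⟩ => ⟨hBE, fun C hC => ?_⟩⟩
  · by_contra! hnone
    have hcompl : M.IsTransversal (M.E \ B) := by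
      refine ⟨sdiff_subset, fun A hA => ?_⟩
      obtain ⟨x, hxA, hxB⟩ := not_subset.1 (hnone A hA)
      exact ⟨x, ⟨M.rows_subset A hA hxA, hxB⟩, hxA⟩
    obtain ⟨C, hC, hCsub⟩ := M.exists_blocker_row_subset hcompl
    obtain ⟨x, hxB, hxC⟩ := hmeets C hC
    exact (hCsub hxC).2 hxB
  · obtain ⟨x, hxC, hxA⟩ := hC.1.2 A hA
    exact ⟨x, hAB hxA, hxC⟩

theorem minimal_superset_of_row_iff (M : Clutter α) {B : Set α} :
    Minimal (fun B => B ⊆ M.E ∧ ∃ A ∈ M.rows, A ⊆ B) B ↔ B ∈ M.rows := by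
  refine ⟨fun ⟨⟨_, A, hA, hAB⟩, hmin⟩ => ?_,
    fun hB => ⟨⟨M.rows_subset B hB, B, hB, subset_rfl⟩, ?_⟩⟩
  · rwa [subset_antisymm hAB (hmin ⟨M.rows_subset A hA, A, hA, subset_rfl⟩ hAB)] at hA
  · rintro C ⟨-, A, hA, hAC⟩ hCB
    exact M.antichain A hA B hB (hAC.trans hCB) ▸ hAC

end Clutter

theorem blocker_blocker (M : Clutter α) : M.blocker.blocker = M := by
  refine Clutter.ext rfl (Set.ext fun B => ?_)
  have hT : M.blocker.IsTransversal = fun B => B ⊆ M.E ∧ ∃ A ∈ M.rows, A ⊆ B :=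
    funext fun _ => propext M.isTransversal_blocker_iff
  rw [Clutter.mem_blocker_rows_iff, hT, Clutter.minimal_superset_of_row_iff]
end

section
/- Let M be a connected clutter with twin elements v and v' (v ≠ v'). Then M / v is a connected clutter. -/
open Set

variable {α : Type*}

/-
Since `v` and `v'` lie in the same rows, removing `v` from two rows cannot create a new
inclusion between them (the witness `v'` survives), so every `A \ {v}` is already a row of
`M / v`. Hence a separation `(X, Y)` of `M / v` is respected by all rows of `M` with `v`
removed, and putting `v` on the side of `v'` gives a separation of `M`.
-/

namespace Clutter

variable {M : Clutter α} {v v' : α} {X Y : Set α}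

theorem IsSeparation.symm (h : M.IsSeparation X Y) : M.IsSeparation Y X := by
  obtain ⟨hX, hY, hdisj, hunion, hrows⟩ := h
  exact ⟨hY, hX, hdisj.symm, union_comm X Y ▸ hunion, fun A hA => (hrows A hA).symm⟩

theorem mem_iff_mem_of_twin (htwin : {A ∈ M.rows | v ∈ A} = {A ∈ M.rows | v' ∈ A})
    {A : Set α} (hA : A ∈ M.rows) : v ∈ A ↔ v' ∈ A := by
  simpa [hA] using Set.ext_iff.1 htwin A

theorem subset_of_sdiff_subset_sdiff_of_twin (hne : v ≠ v')
    (htwin : ∀ A ∈ M.rows, v ∈ A ↔ v' ∈ A) {A B : Set α} (hA : A ∈ M.rows)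
    (hB : B ∈ M.rows) (hAB : A \ {v} ⊆ B \ {v}) : A ⊆ B := by
  intro x hx
  obtain rfl | hxv := eq_or_ne x v
  · have hv'B : v' ∈ B := (hAB ⟨(htwin A hA).1 hx, hne.symm⟩).1
    exact (htwin B hB).2 hv'B
  · exact (hAB ⟨hx, hxv⟩).1

theorem sdiff_singleton_mem_contract_rows_of_twin (hne : v ≠ v')
    (htwin : ∀ A ∈ M.rows, v ∈ A ↔ v' ∈ A) {A : Set α} (hA : A ∈ M.rows) :
    A \ {v} ∈ (M.contract v).rows := by
  refine ⟨⟨A, hA, rfl⟩, ?_⟩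
  rintro _ ⟨B, hB, rfl⟩ hBA
  rw [M.antichain B hB A hA (subset_of_sdiff_subset_sdiff_of_twin hne htwin hB hA hBA)]

theorem IsSeparation.insert_of_contract (hsep : (M.contract v).IsSeparation X Y)
    (hv : v ∈ M.E) (hne : v ≠ v') (hvv' : ∀ A ∈ M.rows, v ∈ A → v' ∈ A)
    (hcontract : ∀ A ∈ M.rows, A \ {v} ∈ (M.contract v).rows) (hv'X : v' ∈ X) :
    M.IsSeparation (insert v X) Y := by
  obtain ⟨-, hY, hdisj, hunion, hrows⟩ := hsep
  change X ∪ Y = M.E \ {v} at hunion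
  have hvY : v ∉ Y := fun h => (hunion.subset (Or.inr h)).2 rfl
  refine ⟨insert_nonempty v X, hY, disjoint_insert_left.2 ⟨hvY, hdisj⟩, ?_, ?_⟩
  · rw [insert_union, hunion, insert_sdiff_singleton, insert_eq_of_mem hv]
  · intro A hA
    rcases hrows _ (hcontract A hA) with hAX | hAY
    · exact Or.inl (sdiff_singleton_subset_iff.1 hAX)
    · refine Or.inr fun x hx => ?_
      obtain rfl | hxv := eq_or_ne x v
      · exact absurd (hAY ⟨hvv' A hA hx, hne.symm⟩) (disjoint_left.1 hdisj hv'X)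
      · exact hAY ⟨hx, hxv⟩

end Clutter

theorem contract_twin_connected (M : Clutter α) (v v' : α) (hv : v ∈ M.E)
    (hv' : v' ∈ M.E) (hne : v ≠ v')
    (htwin : {A ∈ M.rows | v ∈ A} = {A ∈ M.rows | v' ∈ A})
    (hM : M.Connected) : (M.contract v).Connected := by
  rintro ⟨X, Y, hsep⟩
  have htwin' : ∀ A ∈ M.rows, v ∈ A ↔ v' ∈ A :=
    fun A hA => Clutter.mem_iff_mem_of_twin htwin hA
  have hcontract : ∀ A ∈ M.rows, A \ {v} ∈ (M.contract v).rows :=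
    fun A hA => Clutter.sdiff_singleton_mem_contract_rows_of_twin hne htwin' hA
  have hvv' : ∀ A ∈ M.rows, v ∈ A → v' ∈ A := fun A hA => (htwin' A hA).1
  have hv'XY : v' ∈ X ∪ Y := hsep.2.2.2.1 ▸ ⟨hv', hne.symm⟩
  rcases hv'XY with hv'X | hv'Y
  · exact hM ⟨_, _, hsep.insert_of_contract hv hne hvv' hcontract hv'X⟩
  · exact hM ⟨_, _, (hsep.symm.insert_of_contract hv hne hvv' hcontract hv'Y).symm⟩
end

section
/- Let N be a matroid that is not connected and whose dual N* has no circuits of size less than three, and let M be the clutter of circuits of N. Then M is not a connected clutter, but its blocker b(M) is a connected clutter. Consequently, clutter connectivity is not invariant under taking blockers. -/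
open Set
open scoped Matroid

variable {α : Type*}

/-- A circuit of a matroid: a minimal dependent set. -/
def Matroid.IsCircuit' (N : Matroid α) (C : Set α) : Prop := Minimal N.Dep C

/-- The clutter of circuits of a matroid with finite ground set. -/
def circuitClutter (N : Matroid α) (hE : N.E.Finite) : Clutter α where
  E := N.E
  E_finite := hE
  rows := {C | N.IsCircuit' C}
  rows_subset := fun C hC => hC.1.2
  antichain := fun A hA B hB h => Set.Subset.antisymm h (hB.2 hA.1 h)

/-- A separation of a matroid: a partition of the ground set into two non-empty
parts such that every circuit lies in one of the parts. -/
def Matroid.Separation (N : Matroid α) (X Y : Set α) : Prop :=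
  X.Nonempty ∧ Y.Nonempty ∧ Disjoint X Y ∧ X ∪ Y = N.E ∧
    ∀ C, N.IsCircuit' C → C ⊆ X ∨ C ⊆ Y

/-- A matroid is connected if it admits no separation. -/
def Matroid.Connected (N : Matroid α) : Prop := ¬ ∃ X Y, N.Separation X Y

/-- Deletion of a single element from a matroid. -/
def Matroid.deleteElem (N : Matroid α) (v : α) : Matroid α := N ↾ (N.E \ {v})

/-- Contraction of a single element of a matroid, defined by duality. -/
def Matroid.contractElem (N : Matroid α) (v : α) : Matroid α := ((N✶ ↾ (N.E \ {v}))✶)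

/-!
Every separation of the matroid `N` is a separation of its circuit clutter. The rows of the
blocker include the bases of `N✶`, and since `N✶` has no circuits of size one or two, any two
elements of the ground set form an independent set of `N✶`, hence lie in a common base. A row
meeting both sides of a partition of the ground set rules out every separation of the blocker.
-/

theorem circuitClutter_connected_iff (N : Matroid α) (hE : N.E.Finite) :
    (circuitClutter N hE).Connected ↔ N.Connected :=
  Iff.rfl

theorem circuitClutter_isTransversal_iff (N : Matroid α) (hE : N.E.Finite) (B : Set α) :
    (circuitClutter N hE).IsTransversal B ↔ B ⊆ N.E ∧ N.Indep (N.E \ B) := by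
  rw [N.indep_iff_forall_subset_not_isCircuit sdiff_subset]
  refine and_congr_right fun _ => forall_congr' fun C => ⟨?_, ?_⟩
  · rintro hmeet hCB hC
    obtain ⟨x, hxB, hxC⟩ := hmeet hC
    exact (hCB hxC).2 hxB
  · intro hCB (hC : N.IsCircuit C)
    by_contra hdisj
    exact hCB (fun x hx => ⟨hC.subset_ground hx, fun hxB => hdisj ⟨x, hxB, hx⟩⟩) hC

theorem mem_blocker_rows_circuitClutter_of_isBase_dual (N : Matroid α) (hE : N.E.Finite)
    {B : Set α} (hB : N✶.IsBase B) : B ∈ (circuitClutter N hE).blocker.rows := by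
  have hBE : B ⊆ N.E := hB.subset_ground
  have hBc : N.IsBase (N.E \ B) := hB.compl_isBase_of_dual
  refine ⟨(circuitClutter_isTransversal_iff N hE B).2 ⟨hBE, hBc.indep⟩, fun C hC hCB => ?_⟩
  obtain ⟨hCE, hCc⟩ := (circuitClutter_isTransversal_iff N hE C).1 hC
  have hcompl : N.E \ B = N.E \ C := hBc.eq_of_subset_indep hCc (sdiff_subset_sdiff_right hCB)
  rw [← sdiff_sdiff_cancel_left hCE, ← sdiff_sdiff_cancel_left hBE, hcompl]

theorem Matroid.indep_of_ncard_le_of_forall_isCircuit (M : Matroid α) {k : ℕ}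
    (hgirth : ∀ C, M.IsCircuit C → k < C.ncard) {I : Set α} (hIE : I ⊆ M.E) (hIfin : I.Finite)
    (hI : I.ncard ≤ k) : M.Indep I := by
  rw [M.indep_iff_forall_subset_not_isCircuit hIE]
  intro C hCI hC
  have := ncard_le_ncard hCI hIfin
  have := hgirth C hC
  omega

theorem Clutter.connected_of_forall_exists_row (M : Clutter α)
    (h : ∀ x ∈ M.E, ∀ y ∈ M.E, ∃ A ∈ M.rows, x ∈ A ∧ y ∈ A) : M.Connected := by
  rintro ⟨X, Y, ⟨x, hx⟩, ⟨y, hy⟩, hXY, hE, hrows⟩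
  obtain ⟨A, hA, hxA, hyA⟩ := h x (hE ▸ Or.inl hx) y (hE ▸ Or.inr hy)
  rcases hrows A hA with hAX | hAY
  · exact hXY.notMem_of_mem_left (hAX hyA) hy
  · exact hXY.notMem_of_mem_left hx (hAY hxA)

theorem blocker_connectivity_not_invariant (N : Matroid α) (hE : N.E.Finite)
    (hnc : ¬ N.Connected)
    (hdual : ∀ C, (N✶).IsCircuit' C → 3 ≤ C.ncard) :
    ¬ (circuitClutter N hE).Connected ∧ ((circuitClutter N hE).blocker).Connected := by
  refine ⟨(circuitClutter_connected_iff N hE).not.2 hnc,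
    Clutter.connected_of_forall_exists_row _ fun x hx y hy => ?_⟩
  -- `IsCircuit'` is Mathlib's `Matroid.IsCircuit` by definition.
  have hpair : N✶.Indep {x, y} :=
    N✶.indep_of_ncard_le_of_forall_isCircuit hdual (pair_subset hx hy) (toFinite _)
      ((ncard_insert_le x {y}).trans (by rw [ncard_singleton]))
  obtain ⟨B, hB, hxyB⟩ := hpair.exists_isBase_superset
  exact ⟨B, mem_blocker_rows_circuitClutter_of_isBase_dual N hE hB,
    hxyB (mem_insert x {y}), hxyB (mem_insert_of_mem x rfl)⟩
end
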